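/- Let V' be a finite-dimensional real vector space with a symmetric bilinear form ⟨·,·⟩ and let V = V' ⊕ ℝw ⊕ ℝw* carry the hyperbolic extension of the form. For a 2-dimensional positive-definite subspace P ⊂ V', an element ω ∈ V' with ω ⊥ P and α := ω² > 0, and B ∈ V', set H₁(P,B) = {x − ⟨x,B⟩w : x ∈ P} and H₂(ω,B) = ℝ(½(α−B²)w + w* + B) ⊕ ℝ(ω − ⟨ω,B⟩w). Let ψ₁ : V → V be the linear map which is the identity on V' and sends w ↦ w*, w* ↦ w. Assume B ⊥ P, B ⊥ ω and α ≠ B², and set λ = 2/(α − B²). Then ψ₁ is an isometry of V, and ψ₁(H₁(P,B)) = H₁(P, λB) and ψ₁(H₂(ω,B)) = H₂(λω, λB) as subspaces of V (where H₂(λω, λB) is formed with (λω)² in place of α). -/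

import Mathlib

/-!
`ψ₁` swaps the `w`- and `w*`-coordinates, and the hyperbolic pairing is symmetric in them.
When `B ⊥ P` the correction term `⟨x,B⟩w` vanishes, so `H₁(P,B) = P` is fixed by `ψ₁`.
For `H₂`, `ψ₁` sends the two generators to `B + w + ½(α−B²)w*` and `ω`; multiplying by
`λ = 2/(α−B²)` gives exactly the generators of `H₂(λω,λB)`, because `(λω)² − (λB)² = 2λ`
and `⟨λω,λB⟩ = 0`.
-/

/-- The hyperbolic extension form on `V' × ℝ × ℝ`, where `(x, a, c)` represents
`x + a•w + c•w*`:  `V' ⊥ (ℝw ⊕ ℝw*)`, `w² = w*² = 0`, `⟨w,w*⟩ = 1`. -/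
noncomputable def hypPairing {V : Type*} [AddCommGroup V] [Module ℝ V]
    (b : LinearMap.BilinForm ℝ V) (p q : V × ℝ × ℝ) : ℝ :=
  b p.1 q.1 + p.2.1 * q.2.2 + p.2.2 * q.2.1

/-- `H₁(P,B) = {x − ⟨x,B⟩w : x ∈ P}`. -/
noncomputable def H1 {V : Type*} [AddCommGroup V] [Module ℝ V]
    (b : LinearMap.BilinForm ℝ V) (P : Submodule ℝ V) (B : V) :
    Submodule ℝ (V × ℝ × ℝ) :=
  P.map (LinearMap.prod LinearMap.id (LinearMap.prod (-(b.flip B)) 0))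

/-- `H₂(ω,B) = ℝ(½(ω²−B²)w + w* + B) ⊕ ℝ(ω − ⟨ω,B⟩w)`. -/
noncomputable def H2 {V : Type*} [AddCommGroup V] [Module ℝ V]
    (b : LinearMap.BilinForm ℝ V) (ω B : V) : Submodule ℝ (V × ℝ × ℝ) :=
  Submodule.span ℝ {(B, (b ω ω - b B B) / 2, 1), (ω, -(b ω B), 0)}

/-- `ψ₁ : V → V`: the identity on `V'`, `w ↦ w*`, `w* ↦ w`. -/
noncomputable def psi1 (V : Type*) [AddCommGroup V] [Module ℝ V] :
    (V × ℝ × ℝ) →ₗ[ℝ] (V × ℝ × ℝ) :=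
  LinearMap.prodMap LinearMap.id
    (LinearMap.prod (LinearMap.snd ℝ ℝ ℝ) (LinearMap.fst ℝ ℝ ℝ))

open Pointwise

section Psi1

variable {V : Type*} [AddCommGroup V] [Module ℝ V]

@[simp]
theorem psi1_apply (p : V × ℝ × ℝ) : psi1 V p = (p.1, p.2.2, p.2.1) := rfl

theorem hypPairing_psi1 (b : LinearMap.BilinForm ℝ V) (p q : V × ℝ × ℝ) :
    hypPairing b (psi1 V p) (psi1 V q) = hypPairing b p q := by
  simp only [hypPairing, psi1_apply]
  ring

theorem psi1_comp_inl : psi1 V ∘ₗ LinearMap.inl ℝ V (ℝ × ℝ) = LinearMap.inl ℝ V (ℝ × ℝ) :=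
  rfl

theorem H1_eq_map_inl {b : LinearMap.BilinForm ℝ V} {P : Submodule ℝ V} {B : V}
    (hBP : ∀ x ∈ P, b x B = 0) : H1 b P B = P.map (LinearMap.inl ℝ V (ℝ × ℝ)) := by
  ext p
  simp only [H1, Submodule.mem_map]
  refine exists_congr fun x => and_congr_right fun hx => ?_
  simp [hBP x hx, Prod.mk_zero_zero]

theorem map_psi1_H1 {b : LinearMap.BilinForm ℝ V} {P : Submodule ℝ V} {B B' : V}
    (hBP : ∀ x ∈ P, b x B = 0) (hB'P : ∀ x ∈ P, b x B' = 0) :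
    (H1 b P B).map (psi1 V) = H1 b P B' := by
  rw [H1_eq_map_inl hBP, H1_eq_map_inl hB'P, ← Submodule.map_comp, psi1_comp_inl]

theorem map_psi1_H2 {b : LinearMap.BilinForm ℝ V} {ω B : V} (hωB : b ω B = 0)
    (hαB : b ω ω ≠ b B B) :
    (H2 b ω B).map (psi1 V) =
      H2 b ((2 / (b ω ω - b B B)) • ω) ((2 / (b ω ω - b B B)) • B) := by
  have hc : 2 / (b ω ω - b B B) * ((b ω ω - b B B) / 2) = 1 := by
    field_simp [sub_ne_zero.mpr hαB]
  set c : ℝ := 2 / (b ω ω - b B B)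
  have hc0 : c ≠ 0 := left_ne_zero_of_mul_eq_one hc
  have hgen : ({(c • B, (b (c • ω) (c • ω) - b (c • B) (c • B)) / 2, 1),
      (c • ω, -b (c • ω) (c • B), 0)} : Set (V × ℝ × ℝ)) =
      c • psi1 V '' {(B, (b ω ω - b B B) / 2, 1), (ω, -b ω B, 0)} := by
    simp only [Set.image_pair, Set.smul_set_insert, Set.smul_set_singleton, psi1_apply,
      map_smul, LinearMap.smul_apply, smul_eq_mul, hωB, Prod.smul_mk, mul_zero, neg_zero]
    congr 3
    · linear_combination c * hc
    · exact hc.symm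
  rw [H2, H2, Submodule.map_span, hgen, Submodule.span_smul_eq_of_isUnit _ _ hc0.isUnit]

end Psi1

theorem stmt17_general {V : Type*} [AddCommGroup V] [Module ℝ V]
    (b : LinearMap.BilinForm ℝ V) (hsymm : ∀ x y, b x y = b y x)
    (P : Submodule ℝ V)
    (ω : V)
    (B : V) (hBP : ∀ x ∈ P, b B x = 0) (hBω : b B ω = 0)
    (hαB : b ω ω ≠ b B B) :
    (∀ p q : V × ℝ × ℝ, hypPairing b (psi1 V p) (psi1 V q) = hypPairing b p q) ∧
    Submodule.map (psi1 V) (H1 b P B) = H1 b P ((2 / (b ω ω - b B B)) • B) ∧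
    Submodule.map (psi1 V) (H2 b ω B) =
      H2 b ((2 / (b ω ω - b B B)) • ω) ((2 / (b ω ω - b B B)) • B) := by
  have hPB : ∀ x ∈ P, b x B = 0 := fun x hx => (hsymm x B).trans (hBP x hx)
  refine ⟨hypPairing_psi1 b, map_psi1_H1 hPB fun x hx => ?_,
    map_psi1_H2 ((hsymm ω B).trans hBω) hαB⟩
  simp [hPB x hx]

/-- `ψ₁` is an isometry of `V = V' ⊕ ℝw ⊕ ℝw*`, and (for `B ⊥ P`, `B ⊥ ω`, `α ≠ B²`,
`λ = 2/(α − B²)`) one has `ψ₁(H₁(P,B)) = H₁(P,λB)` and `ψ₁(H₂(ω,B)) = H₂(λω,λB)`. -/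
theorem stmt17 {V : Type*} [AddCommGroup V] [Module ℝ V] [FiniteDimensional ℝ V]
    (b : LinearMap.BilinForm ℝ V) (hsymm : ∀ x y, b x y = b y x)
    (P : Submodule ℝ V) (hP2 : Module.finrank ℝ P = 2)
    (hPpos : ∀ x ∈ P, x ≠ 0 → 0 < b x x)
    (ω : V) (hωP : ∀ x ∈ P, b ω x = 0) (hω : 0 < b ω ω)
    (B : V) (hBP : ∀ x ∈ P, b B x = 0) (hBω : b B ω = 0)
    (hαB : b ω ω ≠ b B B) :
    (∀ p q : V × ℝ × ℝ, hypPairing b (psi1 V p) (psi1 V q) = hypPairing b p q) ∧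
    Submodule.map (psi1 V) (H1 b P B) = H1 b P ((2 / (b ω ω - b B B)) • B) ∧
    Submodule.map (psi1 V) (H2 b ω B) =
      H2 b ((2 / (b ω ω - b B B)) • ω) ((2 / (b ω ω - b B B)) • B) :=
  stmt17_general b hsymm P ω B hBP hBω hαB
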